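/- arXiv:1108.1385 — 2 statements merged into one kernel-verified Lean document; each statement's English description precedes it below -/
import Mathlib

section
/- (Anti-normal-ordering quantization formula.) Let F(p,q,θ) = Σ_{n=0}^N B_n(p) qⁿ with each B_n : ℝ → ℂ smooth, and let Φ(p,q,θ) = φ(p) e^{i(pq/ħ + θ)} with φ : ℝ → ℂ smooth. Then the anti-normal quantum product F •μ Φ := Σ_{k≥0} (−ħ/i)^k (1/k!) (∂_q^k F)(∂_p^k Φ) (a finite sum) equals Σ_{n=0}^N (−ħ/i)ⁿ B_n(p) φ^{(n)}(p) e^{i(pq/ħ + θ)}. -/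
open Complex

/-- Partial derivative in the `p` (first) coordinate. -/
noncomputable def dP (f : ℝ × ℝ × ℝ → ℂ) : ℝ × ℝ × ℝ → ℂ :=
  fun x => deriv (fun s => f (s, x.2.1, x.2.2)) x.1

/-- Partial derivative in the `q` (second) coordinate. -/
noncomputable def dQ (f : ℝ × ℝ × ℝ → ℂ) : ℝ × ℝ × ℝ → ℂ :=
  fun x => deriv (fun s => f (x.1, s, x.2.2)) x.2.1

/-- Partial derivative in the fiber coordinate `θ` (third coordinate). -/
noncomputable def dT (f : ℝ × ℝ × ℝ → ℂ) : ℝ × ℝ × ℝ → ℂ :=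
  fun x => deriv (fun s => f (x.1, x.2.1, s)) x.2.2

/-- Horizontal lift of `∂_q`: the operator `B = ∂_q − (p/ħ) ∂_θ`. -/
noncomputable def Bop (hb : ℝ) (f : ℝ × ℝ × ℝ → ℂ) : ℝ × ℝ × ℝ → ℂ :=
  fun x => dQ f x - ((x.1 / hb : ℝ) : ℂ) * dT f x

/-- The Souriau bracket `⟦f,g⟧ = (∂_p f)(B g) − (∂_p g)(B f)`. -/
noncomputable def souriau (hb : ℝ) (f g : ℝ × ℝ × ℝ → ℂ) : ℝ × ℝ × ℝ → ℂ :=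
  fun x => dP f x * Bop hb g x - dP g x * Bop hb f x

/- ### Auxiliary lemmas -/

lemma dP_iterate (k : ℕ) (f : ℝ × ℝ × ℝ → ℂ) (x : ℝ × ℝ × ℝ) :
    dP^[k] f x = deriv^[k] (fun s => f (s, x.2.1, x.2.2)) x.1 := by
  induction k generalizing f with
  | zero => rfl
  | succ k ih =>
    rw [Function.iterate_succ_apply, ih (dP f)]
    have h : (fun s => dP f (s, x.2.1, x.2.2)) = deriv (fun s => f (s, x.2.1, x.2.2)) := rfl
    rw [h, Function.iterate_succ_apply]

lemma dQ_iterate (k : ℕ) (f : ℝ × ℝ × ℝ → ℂ) (x : ℝ × ℝ × ℝ) :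
    dQ^[k] f x = deriv^[k] (fun s => f (x.1, s, x.2.2)) x.2.1 := by
  induction k generalizing f with
  | zero => rfl
  | succ k ih =>
    rw [Function.iterate_succ_apply, ih (dQ f)]
    have h : (fun s => dQ f (x.1, s, x.2.2)) = deriv (fun s => f (x.1, s, x.2.2)) := rfl
    rw [h, Function.iterate_succ_apply]

lemma iter_deriv_poly (b : ℕ → ℂ) (N : ℕ) : ∀ (k : ℕ) (s : ℝ),
    deriv^[k] (fun s : ℝ => ∑ n ∈ Finset.range (N+1), b n * (s:ℂ)^n) s
      = ∑ n ∈ Finset.range (N+1), b n * (n.descFactorial k : ℂ) * (s:ℂ)^(n-k)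
  | 0, s => by simp
  | (k+1), s => by
    rw [Function.iterate_succ_apply', funext (iter_deriv_poly b N k)]
    have hd : ∀ n ∈ Finset.range (N+1),
        HasDerivAt (fun s : ℝ => b n * (n.descFactorial k : ℂ) * (s:ℂ)^(n-k))
          (b n * (n.descFactorial k : ℂ) * (((n-k : ℕ) : ℂ) * (s:ℂ)^(n-k-1))) s :=
      fun n _ => ((hasDerivAt_pow (n-k) (s:ℂ)).comp_ofReal).const_mul _
    rw [(HasDerivAt.fun_sum hd).deriv]
    refine Finset.sum_congr rfl fun n _ => ?_
    rw [Nat.descFactorial_succ]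
    have h1 : n - (k+1) = n - k - 1 := by omega
    rw [h1]
    push_cast
    ring

lemma pascal_sum (ψ : ℕ → ℂ) (c : ℂ) (k : ℕ) :
    ∑ j ∈ Finset.range (k+2), (((k+1).choose j : ℕ) : ℂ) * ψ (k+1-j) * c^j
      = (∑ j ∈ Finset.range (k+1), (k.choose j : ℂ) * ψ (k-j+1) * c^j)
        + (∑ j ∈ Finset.range (k+1), (k.choose j : ℂ) * ψ (k-j) * c^j) * c := by
  have e1 : ∑ j ∈ Finset.range (k+2), (((k+1).choose j : ℕ) : ℂ) * ψ (k+1-j) * c^j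
      = (∑ j ∈ Finset.range (k+1), (((k+1).choose (j+1) : ℕ) : ℂ) * ψ (k-j) * c^(j+1))
        + ψ (k+1) := by
    rw [Finset.sum_range_succ' (fun j => (((k+1).choose j : ℕ) : ℂ) * ψ (k+1-j) * c^j) (k+1)]
    simp [Nat.succ_sub_succ]
  have e2 : ∑ j ∈ Finset.range (k+1), (k.choose j : ℂ) * ψ (k-j+1) * c^j
      = (∑ j ∈ Finset.range k, (k.choose (j+1) : ℂ) * ψ (k-j) * c^(j+1)) + ψ (k+1) := by
    rw [Finset.sum_range_succ' (fun j => (k.choose j : ℂ) * ψ (k-j+1) * c^j) k]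
    simp only [Nat.choose_zero_right, Nat.cast_one, one_mul, pow_zero, mul_one, Nat.sub_zero]
    congr 1
    refine Finset.sum_congr rfl fun j hj => ?_
    have h : k - (j+1) + 1 = k - j := by
      have := Finset.mem_range.mp hj; omega
    rw [h]
  have e3 : ∑ j ∈ Finset.range (k+1), (((k+1).choose (j+1) : ℕ) : ℂ) * ψ (k-j) * c^(j+1)
      = (∑ j ∈ Finset.range (k+1), (k.choose j : ℂ) * ψ (k-j) * c^j * c)
        + ∑ j ∈ Finset.range k, (k.choose (j+1) : ℂ) * ψ (k-j) * c^(j+1) := by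
    have e4 : ∀ j ∈ Finset.range (k+1),
        (((k+1).choose (j+1) : ℕ) : ℂ) * ψ (k-j) * c^(j+1)
          = (k.choose j : ℂ) * ψ (k-j) * c^j * c
            + (k.choose (j+1) : ℂ) * ψ (k-j) * c^(j+1) := by
      intro j _
      rw [Nat.choose_succ_succ]
      push_cast
      rw [pow_succ]
      ring
    rw [Finset.sum_congr rfl e4, Finset.sum_add_distrib]
    congr 1
    rw [Finset.sum_range_succ]
    simp
  rw [e1, e2, e3, Finset.sum_mul]
  ring

lemma iter_deriv_mul_exp (φ : ℝ → ℂ) (hφ : ContDiff ℝ (⊤ : ℕ∞) φ) (c d : ℂ) : ∀ (k : ℕ) (s : ℝ),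
    deriv^[k] (fun s : ℝ => φ s * Complex.exp (c * s + d)) s
      = (∑ j ∈ Finset.range (k+1), (k.choose j : ℂ) * deriv^[k-j] φ s * c^j)
          * Complex.exp (c * s + d)
  | 0, s => by simp
  | (k+1), s => by
    rw [Function.iterate_succ_apply', funext (iter_deriv_mul_exp φ hφ c d k)]
    have hdiff : ∀ m, Differentiable ℝ (deriv^[m] φ) := fun m => by
      rw [← iteratedDeriv_eq_iterate]
      exact hφ.differentiable_iteratedDeriv m (by exact_mod_cast ENat.coe_lt_top m)
    have hE : HasDerivAt (fun s : ℝ => Complex.exp (c * s + d))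
        (c * Complex.exp (c * s + d)) s := by
      have h := (((hasDerivAt_id (s:ℂ)).const_mul c).add_const d).cexp.comp_ofReal
      simp only [id_eq, mul_one] at h
      exact h.congr_deriv (mul_comm _ _)
    have hS : HasDerivAt
        (fun s : ℝ => ∑ j ∈ Finset.range (k+1), (k.choose j : ℂ) * deriv^[k-j] φ s * c^j)
        (∑ j ∈ Finset.range (k+1), (k.choose j : ℂ) * deriv^[k-j+1] φ s * c^j) s := by
      refine HasDerivAt.fun_sum fun j _ => ?_
      have h1 : HasDerivAt (deriv^[k-j] φ) (deriv^[k-j+1] φ s) s := by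
        rw [Function.iterate_succ_apply']
        exact ((hdiff (k-j)) s).hasDerivAt
      exact (h1.const_mul _).mul_const _
    rw [(hS.fun_mul hE).deriv]
    have hps := pascal_sum (fun m => deriv^[m] φ s) c k
    rw [show (k+1)+1 = k+2 from rfl, hps]
    ring

lemma alt_sum_choose_complex (r : ℕ) :
    ∑ t ∈ Finset.range (r+1), (-1 : ℂ)^t * (r.choose t : ℂ) = if r = 0 then 1 else 0 := by
  have h := Int.alternating_sum_range_choose (n := r)
  have h2 : ((∑ m ∈ Finset.range (r + 1), ((-1) ^ m * r.choose m : ℤ) : ℤ) : ℂ)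
      = ∑ t ∈ Finset.range (r+1), (-1 : ℂ)^t * (r.choose t : ℂ) := by
    push_cast; rfl
  rw [← h2, h]; split <;> simp

lemma triangle_swap (n : ℕ) (g : ℕ → ℕ → ℂ) :
    ∑ k ∈ Finset.range (n+1), ∑ m ∈ Finset.range (k+1), g k m
      = ∑ m ∈ Finset.range (n+1), ∑ k ∈ Finset.Ico m (n+1), g k m := by
  simp only [Finset.range_eq_Ico]
  exact (Finset.sum_Ico_Ico_comm 0 (n+1) fun m k => g k m).symm

/-- The key combinatorial identity behind anti-normal ordering. -/
lemma key_sum (c e q : ℂ) (hce : c * e = -q) (ψ : ℕ → ℂ) {n N : ℕ} (hn : n ≤ N) :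
    ∑ k ∈ Finset.range (N+1), c ^ k / (Nat.factorial k : ℂ) * (n.descFactorial k : ℂ) *
        q ^ (n - k) * (∑ j ∈ Finset.range (k+1), (k.choose j : ℂ) * ψ (k - j) * e ^ j)
    = c ^ n * ψ n := by
  -- restrict the sum to `k ≤ n`
  rw [← Finset.sum_subset (Finset.range_subset_range.mpr (by omega) :
      Finset.range (n+1) ⊆ Finset.range (N+1)) (by
    intro k _ hk
    have hlt : n < k := by
      by_contra hcon
      exact hk (Finset.mem_range.mpr (by omega))
    rw [Nat.descFactorial_eq_zero_iff_lt.mpr hlt]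
    simp)]
  -- rewrite each term, reflecting the inner sum
  have step1 : ∀ k ∈ Finset.range (n+1),
      c ^ k / (Nat.factorial k : ℂ) * (n.descFactorial k : ℂ) * q ^ (n - k) *
          (∑ j ∈ Finset.range (k+1), (k.choose j : ℂ) * ψ (k - j) * e ^ j)
      = ∑ m ∈ Finset.range (k+1),
          (n.choose k : ℂ) * (k.choose m : ℂ) * ψ m * (c ^ k * e ^ (k-m) * q ^ (n-k)) := by
    intro k hk
    have hrefl : ∑ j ∈ Finset.range (k+1), (k.choose j : ℂ) * ψ (k - j) * e ^ j
        = ∑ m ∈ Finset.range (k+1), (k.choose m : ℂ) * ψ m * e ^ (k - m) := by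
      rw [← Finset.sum_range_reflect]
      refine Finset.sum_congr rfl fun m hm => ?_
      have hm' : m ≤ k := by have := Finset.mem_range.mp hm; omega
      have h1 : k + 1 - 1 - m = k - m := by omega
      have h2 : k - (k - m) = m := by omega
      rw [h1, h2, Nat.choose_symm hm']
    rw [hrefl, Finset.mul_sum]
    refine Finset.sum_congr rfl fun m _ => ?_
    have hdesc : (n.descFactorial k : ℂ) = (Nat.factorial k : ℂ) * (n.choose k : ℂ) := by
      exact_mod_cast congrArg (Nat.cast (R := ℂ)) (Nat.descFactorial_eq_factorial_mul_choose n k)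
    have hkf : (Nat.factorial k : ℂ) ≠ 0 := Nat.cast_ne_zero.mpr k.factorial_ne_zero
    field_simp [hdesc]
    rw [hdesc]; ring
  rw [Finset.sum_congr rfl step1, triangle_swap]
  -- evaluate the inner sums
  have step2 : ∀ m ∈ Finset.range (n+1),
      ∑ k ∈ Finset.Ico m (n+1),
          (n.choose k : ℂ) * (k.choose m : ℂ) * ψ m * (c ^ k * e ^ (k-m) * q ^ (n-k))
      = (n.choose m : ℂ) * ψ m * c ^ m * q ^ (n-m) * (if n - m = 0 then 1 else 0) := by
    intro m hm
    have hmn : m ≤ n := by have := Finset.mem_range.mp hm; omega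
    rw [Finset.sum_Ico_eq_sum_range]
    have hnm : n + 1 - m = (n - m) + 1 := by omega
    rw [hnm]
    have hterm : ∀ t ∈ Finset.range ((n-m)+1),
        (n.choose (m+t) : ℂ) * ((m+t).choose m : ℂ) * ψ m *
            (c ^ (m+t) * e ^ ((m+t)-m) * q ^ (n-(m+t)))
        = ((n.choose m : ℂ) * ψ m * c ^ m * q ^ (n-m)) *
            ((-1 : ℂ)^t * ((n-m).choose t : ℂ)) := by
      intro t ht
      have ht' : t ≤ n - m := by have := Finset.mem_range.mp ht; omega
      have hmtn : m + t ≤ n := by omega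
      have hchoose : (n.choose (m+t)) * ((m+t).choose m) = n.choose m * (n-m).choose t := by
        have h := Nat.choose_mul (n := n) (k := m+t) (s := m) (Nat.le_add_right m t)
        simpa using h
      have hcast : (n.choose (m+t) : ℂ) * ((m+t).choose m : ℂ)
          = (n.choose m : ℂ) * ((n-m).choose t : ℂ) := by
        exact_mod_cast congrArg (Nat.cast (R := ℂ)) hchoose
      have h1 : (m+t) - m = t := by omega
      have h2 : n - (m+t) = (n-m) - t := by omega
      have hq : q ^ (n-m) = q ^ t * q ^ ((n-m)-t) := by
        rw [← pow_add]
        congr 1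
        omega
      have hpow : c ^ (m+t) * e ^ t = c ^ m * ((-1:ℂ)^t * q ^ t) := by
        rw [pow_add, mul_assoc, ← mul_pow, hce]
        congr 1
        rw [neg_eq_neg_one_mul, mul_pow]
      rw [h1, h2, hcast]
      calc (n.choose m : ℂ) * ((n-m).choose t : ℂ) * ψ m *
              (c ^ (m+t) * e ^ t * q ^ ((n-m)-t))
          = (n.choose m : ℂ) * ((n-m).choose t : ℂ) * ψ m *
              (c ^ m * ((-1:ℂ)^t * q ^ t) * q ^ ((n-m)-t)) := by rw [hpow]
        _ = ((n.choose m : ℂ) * ψ m * c ^ m * (q ^ t * q ^ ((n-m)-t))) *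
              ((-1 : ℂ)^t * ((n-m).choose t : ℂ)) := by ring
        _ = ((n.choose m : ℂ) * ψ m * c ^ m * q ^ (n-m)) *
              ((-1 : ℂ)^t * ((n-m).choose t : ℂ)) := by rw [← hq]
    rw [Finset.sum_congr rfl hterm, ← Finset.mul_sum, alt_sum_choose_complex]
  rw [Finset.sum_congr rfl step2]
  -- only `m = n` survives
  rw [Finset.sum_eq_single_of_mem n (Finset.self_mem_range_succ n) (by
    intro m hm hmn
    have hne : ¬ (n - m = 0) := by
      have := Finset.mem_range.mp hm
      omega
    rw [if_neg hne, mul_zero])]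
  rw [Nat.sub_self, if_pos rfl, Nat.choose_self]
  push_cast
  ring

/-- Anti-normal-ordering quantization formula: for `F = Σ_n B_n(p) qⁿ` and
`Φ = φ(p)e^{i(pq/ħ+θ)}`, `F •μ Φ = Σ_n (−ħ/i)ⁿ B_n(p) φ⁽ⁿ⁾(p) e^{i(pq/ħ+θ)}`. -/
theorem antinormal_ordering_quantization (hb : ℝ) (hhbar : 0 < hb)
    (N : ℕ) (B : ℕ → ℝ → ℂ) (hB : ∀ n, ContDiff ℝ (⊤ : ℕ∞) (B n))
    (φ : ℝ → ℂ) (hφ : ContDiff ℝ (⊤ : ℕ∞) φ)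
    (F Φ : ℝ × ℝ × ℝ → ℂ)
    (hF : F = fun x => ∑ n ∈ Finset.range (N + 1), B n x.1 * (x.2.1 : ℂ) ^ n)
    (hΦ : Φ = fun x => φ x.1 *
        Complex.exp (Complex.I * ((x.1 * x.2.1 / hb + x.2.2 : ℝ) : ℂ))) :
    ∀ x : ℝ × ℝ × ℝ,
      (∑' k : ℕ, (-((hb : ℂ) / Complex.I)) ^ k / (Nat.factorial k : ℂ) *
          (dQ^[k] F x * dP^[k] Φ x)) =
      ∑ n ∈ Finset.range (N + 1), (-((hb : ℂ) / Complex.I)) ^ n * B n x.1 *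
          deriv^[n] φ x.1 * Complex.exp (Complex.I * ((x.1 * x.2.1 / hb + x.2.2 : ℝ) : ℂ)) := by
  rintro ⟨p, q, θ⟩
  dsimp only
  set c : ℂ := -((hb : ℂ) / Complex.I) with hc
  set e : ℂ := Complex.I * q / hb with he
  have hbne : (hb : ℂ) ≠ 0 := Complex.ofReal_ne_zero.mpr hhbar.ne'
  have hce : c * e = -(q : ℂ) := by
    rw [hc, he]
    field_simp
  set ψ : ℕ → ℂ := fun m => deriv^[m] φ p with hψ
  -- exponential rewriting
  have hexp : ∀ s : ℝ, Complex.exp (Complex.I * ((s * q / hb + θ : ℝ) : ℂ))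
      = Complex.exp (e * s + Complex.I * θ) := by
    intro s
    congr 1
    push_cast
    rw [he]
    field_simp
  set E : ℂ := Complex.exp (e * p + Complex.I * θ) with hE
  -- the iterated partial q-derivatives of F
  have hQk : ∀ k, dQ^[k] F (p, q, θ)
      = ∑ n ∈ Finset.range (N+1), B n p * (n.descFactorial k : ℂ) * (q:ℂ)^(n-k) := by
    intro k
    have h1 : dQ^[k] F (p, q, θ) = deriv^[k] (fun s : ℝ => F (p, s, θ)) q :=
      dQ_iterate k F (p, q, θ)
    have hslice : (fun s : ℝ => F (p, s, θ))
        = fun s : ℝ => ∑ n ∈ Finset.range (N+1), B n p * (s:ℂ)^n := by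
      funext s
      rw [hF]
    rw [h1, hslice]
    exact iter_deriv_poly (fun n => B n p) N k q
  -- the iterated partial p-derivatives of Φ
  have hPk : ∀ k, dP^[k] Φ (p, q, θ)
      = (∑ j ∈ Finset.range (k+1), (k.choose j : ℂ) * ψ (k-j) * e^j) * E := by
    intro k
    have h1 : dP^[k] Φ (p, q, θ) = deriv^[k] (fun s : ℝ => Φ (s, q, θ)) p :=
      dP_iterate k Φ (p, q, θ)
    have hslice : (fun s : ℝ => Φ (s, q, θ))
        = fun s : ℝ => φ s * Complex.exp (e * s + Complex.I * θ) := by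
      funext s
      rw [hΦ]
      dsimp only
      rw [hexp s]
    rw [h1, hslice]
    exact iter_deriv_mul_exp φ hφ e (Complex.I * θ) k p
  -- the series is a finite sum
  have hzero : ∀ k ∉ Finset.range (N+1),
      c ^ k / (Nat.factorial k : ℂ) * (dQ^[k] F (p,q,θ) * dP^[k] Φ (p,q,θ)) = 0 := by
    intro k hk
    have hNk : N < k := by
      by_contra hcon
      exact hk (Finset.mem_range.mpr (by omega))
    have h0 : dQ^[k] F (p,q,θ) = 0 := by
      rw [hQk k]
      refine Finset.sum_eq_zero fun n hn => ?_
      have hnk : n < k := by have := Finset.mem_range.mp hn; omega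
      rw [Nat.descFactorial_eq_zero_iff_lt.mpr hnk]
      simp
    rw [h0]
    simp
  rw [tsum_eq_sum hzero, hexp p]
  simp only [hQk, hPk]
  -- factor out the exponential on both sides
  have hL : ∑ k ∈ Finset.range (N+1), c ^ k / (Nat.factorial k : ℂ) *
        ((∑ n ∈ Finset.range (N+1), B n p * (n.descFactorial k : ℂ) * (q:ℂ)^(n-k)) *
          ((∑ j ∈ Finset.range (k+1), (k.choose j : ℂ) * ψ (k-j) * e^j) * E))
      = (∑ k ∈ Finset.range (N+1), c ^ k / (Nat.factorial k : ℂ) *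
          (∑ n ∈ Finset.range (N+1), B n p * (n.descFactorial k : ℂ) * (q:ℂ)^(n-k)) *
          (∑ j ∈ Finset.range (k+1), (k.choose j : ℂ) * ψ (k-j) * e^j)) * E := by
    rw [Finset.sum_mul]
    exact Finset.sum_congr rfl fun k _ => by ring
  have hR : ∑ n ∈ Finset.range (N+1), c ^ n * B n p * ψ n * E
      = (∑ n ∈ Finset.range (N+1), c ^ n * B n p * ψ n) * E := by
    rw [Finset.sum_mul]
  rw [hL, hR]
  congr 1
  -- exchange sums and apply the key identity
  have hswap : ∑ k ∈ Finset.range (N+1), c ^ k / (Nat.factorial k : ℂ) *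
        (∑ n ∈ Finset.range (N+1), B n p * (n.descFactorial k : ℂ) * (q:ℂ)^(n-k)) *
        (∑ j ∈ Finset.range (k+1), (k.choose j : ℂ) * ψ (k-j) * e^j)
      = ∑ n ∈ Finset.range (N+1), B n p *
          (∑ k ∈ Finset.range (N+1), c ^ k / (Nat.factorial k : ℂ) *
            (n.descFactorial k : ℂ) * (q:ℂ)^(n-k) *
            (∑ j ∈ Finset.range (k+1), (k.choose j : ℂ) * ψ (k-j) * e^j)) := by
    have h1 : ∀ k ∈ Finset.range (N+1),
        c ^ k / (Nat.factorial k : ℂ) *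
          (∑ n ∈ Finset.range (N+1), B n p * (n.descFactorial k : ℂ) * (q:ℂ)^(n-k)) *
          (∑ j ∈ Finset.range (k+1), (k.choose j : ℂ) * ψ (k-j) * e^j)
        = ∑ n ∈ Finset.range (N+1), B n p *
            (c ^ k / (Nat.factorial k : ℂ) * (n.descFactorial k : ℂ) * (q:ℂ)^(n-k) *
              (∑ j ∈ Finset.range (k+1), (k.choose j : ℂ) * ψ (k-j) * e^j)) := by
      intro k _
      rw [mul_assoc, Finset.sum_mul, Finset.mul_sum]
      exact Finset.sum_congr rfl fun n _ => by ring
    rw [Finset.sum_congr rfl h1, Finset.sum_comm]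
    exact Finset.sum_congr rfl fun n _ => (Finset.mul_sum _ _ _).symm
  rw [hswap]
  refine Finset.sum_congr rfl fun n hn => ?_
  have hnN : n ≤ N := by have := Finset.mem_range.mp hn; omega
  rw [key_sum c e q hce ψ hnN]
  ring
end

section
/- With N = ∂_{p₁} ∘ B₂ and M = −B₁ ∘ ∂_{p₂} acting on smooth functions u : ℝ³×ℝ³ → ℂ, let H : ℝ³ → ℂ be smooth with ∂_θ H = 0 and let Ψ : ℝ³ → ℂ be a polarized prequantum wave function (∂_θ Ψ = iΨ, ∂_p Ψ = 0). Then both double commutators annihilate H ⊗ Ψ: [N,[N,M]](H ⊗ Ψ) = 0 and [M,[N,M]](H ⊗ Ψ) = 0, where [A,B] = A∘B − B∘A. -/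
open Complex

/-- Lift an operator on `ℝ³ → ℂ` to act in the first factor of `ℝ³ × ℝ³`. -/
noncomputable def L1 (op : (ℝ × ℝ × ℝ → ℂ) → ℝ × ℝ × ℝ → ℂ)
    (u : (ℝ × ℝ × ℝ) × (ℝ × ℝ × ℝ) → ℂ) : (ℝ × ℝ × ℝ) × (ℝ × ℝ × ℝ) → ℂ :=
  fun z => op (fun x => u (x, z.2)) z.1

/-- Lift an operator on `ℝ³ → ℂ` to act in the second factor of `ℝ³ × ℝ³`. -/
noncomputable def L2 (op : (ℝ × ℝ × ℝ → ℂ) → ℝ × ℝ × ℝ → ℂ)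
    (u : (ℝ × ℝ × ℝ) × (ℝ × ℝ × ℝ) → ℂ) : (ℝ × ℝ × ℝ) × (ℝ × ℝ × ℝ) → ℂ :=
  fun z => op (fun y => u (z.1, y)) z.2

/-- The tensor product `(F ⊗ Ψ)(x,y) = F(x)·Ψ(y)`. -/
noncomputable def tens (F Ψ : ℝ × ℝ × ℝ → ℂ) : (ℝ × ℝ × ℝ) × (ℝ × ℝ × ℝ) → ℂ :=
  fun z => F z.1 * Ψ z.2

/-- The lifted normal tensor: `N u = ∂_{p₁}(B₂ u)`. -/
noncomputable def Nop (hb : ℝ) (u : (ℝ × ℝ × ℝ) × (ℝ × ℝ × ℝ) → ℂ) :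
    (ℝ × ℝ × ℝ) × (ℝ × ℝ × ℝ) → ℂ :=
  L1 dP (L2 (Bop hb) u)

/-- The lifted anti-normal tensor: `M u = −B₁(∂_{p₂} u)`. -/
noncomputable def Mop (hb : ℝ) (u : (ℝ × ℝ × ℝ) × (ℝ × ℝ × ℝ) → ℂ) :
    (ℝ × ℝ × ℝ) × (ℝ × ℝ × ℝ) → ℂ :=
  fun z => -(L1 (Bop hb) (L2 dP u) z)

/-- The commutator `[A,B] = A∘B − B∘A` of two operators. -/
noncomputable def commOp
    (A B : ((ℝ × ℝ × ℝ) × (ℝ × ℝ × ℝ) → ℂ) → (ℝ × ℝ × ℝ) × (ℝ × ℝ × ℝ) → ℂ)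
    (u : (ℝ × ℝ × ℝ) × (ℝ × ℝ × ℝ) → ℂ) : (ℝ × ℝ × ℝ) × (ℝ × ℝ × ℝ) → ℂ :=
  fun z => A (B u) z - B (A u) z

section AuxCalc

variable {f : ℝ × ℝ × ℝ → ℂ}

lemma curve1 (a b : ℝ) (s : ℝ) :
    HasDerivAt (fun t : ℝ => ((t, a, b) : ℝ × ℝ × ℝ)) ((1:ℝ), (0:ℝ), (0:ℝ)) s :=
  (hasDerivAt_id s).prodMk ((hasDerivAt_const s a).prodMk (hasDerivAt_const s b))

lemma curve2 (a b : ℝ) (s : ℝ) :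
    HasDerivAt (fun t : ℝ => ((a, t, b) : ℝ × ℝ × ℝ)) ((0:ℝ), (1:ℝ), (0:ℝ)) s :=
  (hasDerivAt_const s a).prodMk ((hasDerivAt_id s).prodMk (hasDerivAt_const s b))

lemma curve3 (a b : ℝ) (s : ℝ) :
    HasDerivAt (fun t : ℝ => ((a, b, t) : ℝ × ℝ × ℝ)) ((0:ℝ), (0:ℝ), (1:ℝ)) s :=
  (hasDerivAt_const s a).prodMk ((hasDerivAt_const s b).prodMk (hasDerivAt_id s))

lemma hasDerivAt_P' (hf : ContDiff ℝ (⊤ : ℕ∞) f) (x : ℝ × ℝ × ℝ) :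
    HasDerivAt (fun s => f (s, x.2.1, x.2.2)) (fderiv ℝ f x (1, 0, 0)) x.1 :=
  ((hf.differentiable (by simp)) x).hasFDerivAt.comp_hasDerivAt x.1 (curve1 x.2.1 x.2.2 x.1)

lemma hasDerivAt_Q' (hf : ContDiff ℝ (⊤ : ℕ∞) f) (x : ℝ × ℝ × ℝ) :
    HasDerivAt (fun s => f (x.1, s, x.2.2)) (fderiv ℝ f x (0, 1, 0)) x.2.1 :=
  ((hf.differentiable (by simp)) x).hasFDerivAt.comp_hasDerivAt x.2.1 (curve2 x.1 x.2.2 x.2.1)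

lemma hasDerivAt_T' (hf : ContDiff ℝ (⊤ : ℕ∞) f) (x : ℝ × ℝ × ℝ) :
    HasDerivAt (fun s => f (x.1, x.2.1, s)) (fderiv ℝ f x (0, 0, 1)) x.2.2 :=
  ((hf.differentiable (by simp)) x).hasFDerivAt.comp_hasDerivAt x.2.2 (curve3 x.1 x.2.1 x.2.2)

lemma dP_eq (hf : ContDiff ℝ (⊤ : ℕ∞) f) : dP f = fun x => fderiv ℝ f x (1, 0, 0) :=
  funext fun x => (hasDerivAt_P' hf x).deriv

lemma dQ_eq (hf : ContDiff ℝ (⊤ : ℕ∞) f) : dQ f = fun x => fderiv ℝ f x (0, 1, 0) :=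
  funext fun x => (hasDerivAt_Q' hf x).deriv

lemma dT_eq (hf : ContDiff ℝ (⊤ : ℕ∞) f) : dT f = fun x => fderiv ℝ f x (0, 0, 1) :=
  funext fun x => (hasDerivAt_T' hf x).deriv

lemma contDiff_fderiv_apply (hf : ContDiff ℝ (⊤ : ℕ∞) f) (v : ℝ × ℝ × ℝ) :
    ContDiff ℝ (⊤ : ℕ∞) (fun x => fderiv ℝ f x v) :=
  (hf.fderiv_right (by simp)).clm_apply contDiff_const

lemma contDiff_dP (hf : ContDiff ℝ (⊤ : ℕ∞) f) : ContDiff ℝ (⊤ : ℕ∞) (dP f) := by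
  rw [dP_eq hf]; exact contDiff_fderiv_apply hf _
lemma contDiff_dQ (hf : ContDiff ℝ (⊤ : ℕ∞) f) : ContDiff ℝ (⊤ : ℕ∞) (dQ f) := by
  rw [dQ_eq hf]; exact contDiff_fderiv_apply hf _
lemma contDiff_dT (hf : ContDiff ℝ (⊤ : ℕ∞) f) : ContDiff ℝ (⊤ : ℕ∞) (dT f) := by
  rw [dT_eq hf]; exact contDiff_fderiv_apply hf _

lemma contDiff_coef (hb : ℝ) : ContDiff ℝ (⊤ : ℕ∞) (fun x : ℝ × ℝ × ℝ => ((x.1 / hb : ℝ) : ℂ)) :=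
  Complex.ofRealCLM.contDiff.comp (contDiff_fst.div_const hb)

lemma contDiff_Bop (hb : ℝ) (hf : ContDiff ℝ (⊤ : ℕ∞) f) : ContDiff ℝ (⊤ : ℕ∞) (Bop hb f) :=
  (contDiff_dQ hf).sub ((contDiff_coef hb).mul (contDiff_dT hf))

lemma fderiv_swap (hf : ContDiff ℝ (⊤ : ℕ∞) f) (x : ℝ × ℝ × ℝ) (v w : ℝ × ℝ × ℝ) :
    fderiv ℝ (fun y => fderiv ℝ f y w) x v = fderiv ℝ (fun y => fderiv ℝ f y v) x w := by
  have hd : DifferentiableAt ℝ (fderiv ℝ f) x :=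
    ((hf.fderiv_right (m := (⊤ : ℕ∞)) (by simp)).differentiable (by simp)) x
  have key : ∀ u : ℝ × ℝ × ℝ,
      fderiv ℝ (fun y => fderiv ℝ f y u) x = (fderiv ℝ (fderiv ℝ f) x).flip u := by
    intro u
    rw [fderiv_clm_apply hd (differentiableAt_const u)]
    simp
  have hsymm : IsSymmSndFDerivAt ℝ f x := hf.contDiffAt.isSymmSndFDerivAt (by rw [minSmoothness_of_isRCLikeNormedField]; exact WithTop.coe_le_coe.mpr (le_top : (2 : ℕ∞) ≤ ⊤))
  rw [key w, key v]
  simpa using hsymm v w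

lemma dPdQ_comm (hf : ContDiff ℝ (⊤ : ℕ∞) f) : dP (dQ f) = dQ (dP f) := by
  rw [dQ_eq hf, dP_eq hf, dP_eq (contDiff_fderiv_apply hf _),
    dQ_eq (contDiff_fderiv_apply hf _)]
  exact funext fun x => fderiv_swap hf x _ _

lemma dPdT_comm (hf : ContDiff ℝ (⊤ : ℕ∞) f) : dP (dT f) = dT (dP f) := by
  rw [dT_eq hf, dP_eq hf, dP_eq (contDiff_fderiv_apply hf _),
    dT_eq (contDiff_fderiv_apply hf _)]
  exact funext fun x => fderiv_swap hf x _ _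

lemma dQdT_comm (hf : ContDiff ℝ (⊤ : ℕ∞) f) : dQ (dT f) = dT (dQ f) := by
  rw [dT_eq hf, dQ_eq hf, dQ_eq (contDiff_fderiv_apply hf _),
    dT_eq (contDiff_fderiv_apply hf _)]
  exact funext fun x => fderiv_swap hf x _ _

end AuxCalc
section Alg
variable (c : ℂ) (f : ℝ × ℝ × ℝ → ℂ) (x : ℝ × ℝ × ℝ) (hb : ℝ)

lemma dP_const_mul_apply : dP (fun y => c * f y) x = c * dP f x := by
  simp only [dP]; exact deriv_const_mul_field c
lemma dQ_const_mul_apply : dQ (fun y => c * f y) x = c * dQ f x := by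
  simp only [dQ]; exact deriv_const_mul_field c
lemma dT_const_mul_apply : dT (fun y => c * f y) x = c * dT f x := by
  simp only [dT]; exact deriv_const_mul_field c
lemma dP_mul_const_apply : dP (fun y => f y * c) x = dP f x * c := by
  simp only [dP]; exact deriv_mul_const_field c
lemma dQ_mul_const_apply : dQ (fun y => f y * c) x = dQ f x * c := by
  simp only [dQ]; exact deriv_mul_const_field c
lemma dT_mul_const_apply : dT (fun y => f y * c) x = dT f x * c := by
  simp only [dT]; exact deriv_mul_const_field c
lemma dP_neg_apply : dP (fun y => -(f y)) x = -(dP f x) := by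
  simp only [dP]; exact deriv.neg
lemma dQ_neg_apply : dQ (fun y => -(f y)) x = -(dQ f x) := by
  simp only [dQ]; exact deriv.neg
lemma dT_neg_apply : dT (fun y => -(f y)) x = -(dT f x) := by
  simp only [dT]; exact deriv.neg

lemma Bop_const_mul_apply : Bop hb (fun y => c * f y) x = c * Bop hb f x := by
  simp only [Bop, dQ_const_mul_apply, dT_const_mul_apply]; ring
lemma Bop_mul_const_apply : Bop hb (fun y => f y * c) x = Bop hb f x * c := by
  simp only [Bop, dQ_mul_const_apply, dT_mul_const_apply]; ring
lemma Bop_neg_apply : Bop hb (fun y => -(f y)) x = -(Bop hb f x) := by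
  simp only [Bop, dQ_neg_apply, dT_neg_apply]; ring

lemma dP_zero : dP (0 : ℝ × ℝ × ℝ → ℂ) = 0 := by
  funext x; simp [dP]
lemma dQ_zero : dQ (0 : ℝ × ℝ × ℝ → ℂ) = 0 := by
  funext x; simp [dQ]
lemma dT_zero : dT (0 : ℝ × ℝ × ℝ → ℂ) = 0 := by
  funext x; simp [dT]
lemma Bop_zero : Bop hb (0 : ℝ × ℝ × ℝ → ℂ) = 0 := by
  funext x; simp [Bop, dQ_zero, dT_zero]
end Alg

section Keys
variable {hb : ℝ} {Ψ H : ℝ × ℝ × ℝ → ℂ}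

lemma hasDerivAt_P (hf : ContDiff ℝ (⊤ : ℕ∞) Ψ) (x : ℝ × ℝ × ℝ) :
    HasDerivAt (fun s => Ψ (s, x.2.1, x.2.2)) (dP Ψ x) x.1 := by
  rw [dP_eq hf]; exact hasDerivAt_P' hf x

lemma hasDerivAt_T (hf : ContDiff ℝ (⊤ : ℕ∞) Ψ) (x : ℝ × ℝ × ℝ) :
    HasDerivAt (fun s => Ψ (x.1, x.2.1, s)) (dT Ψ x) x.2.2 := by
  rw [dT_eq hf]; exact hasDerivAt_T' hf x

lemma coef_hasDerivAt (hb : ℝ) (t : ℝ) :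
    HasDerivAt (fun s : ℝ => ((s / hb : ℝ) : ℂ)) ((1 / hb : ℝ) : ℂ) t := by
  have h := Complex.ofRealCLM.hasFDerivAt.comp_hasDerivAt t ((hasDerivAt_id t).div_const hb)
  simpa [Function.comp_def] using h

/-- K1 : `∂_p (B Ψ) = -(i/ħ) Ψ`. -/
lemma K1 (hΨ : ContDiff ℝ (⊤ : ℕ∞) Ψ) (hΨeq : dT Ψ = fun x => Complex.I * Ψ x)
    (hΨpol : dP Ψ = 0) :
    dP (Bop hb Ψ) = fun y => -(Complex.I / hb) * Ψ y := by
  funext y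
  have hfun : (fun s => Bop hb Ψ (s, y.2.1, y.2.2)) =
      fun s => dQ Ψ (s, y.2.1, y.2.2) -
        ((s / hb : ℝ) : ℂ) * (Complex.I * Ψ (s, y.2.1, y.2.2)) := by
    funext s; simp only [Bop]; rw [congrFun hΨeq]
  have h1 : HasDerivAt (fun s => dQ Ψ (s, y.2.1, y.2.2)) (dP (dQ Ψ) y) y.1 :=
    hasDerivAt_P (contDiff_dQ hΨ) y
  have h3 : HasDerivAt (fun s => Ψ (s, y.2.1, y.2.2)) 0 y.1 := by
    simpa [hΨpol] using hasDerivAt_P hΨ y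
  have total := h1.sub ((coef_hasDerivAt hb y.1).mul (h3.const_mul Complex.I))
  have hPQ : dP (dQ Ψ) = 0 := by rw [dPdQ_comm hΨ, hΨpol, dQ_zero]
  simp only [dP]
  rw [hfun]; erw [total.deriv]
  rw [congrFun hPQ y]
  simp only [Prod.mk.eta, Pi.zero_apply]
  push_cast
  ring

/-- K4 : `∂_θ (B Ψ) = i (B Ψ)`. -/
lemma K4 (hΨ : ContDiff ℝ (⊤ : ℕ∞) Ψ) (hΨeq : dT Ψ = fun x => Complex.I * Ψ x) :
    dT (Bop hb Ψ) = fun y => Complex.I * Bop hb Ψ y := by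
  funext y
  have hfun : (fun s => Bop hb Ψ (y.1, y.2.1, s)) =
      fun s => dQ Ψ (y.1, y.2.1, s) -
        ((y.1 / hb : ℝ) : ℂ) * dT Ψ (y.1, y.2.1, s) := by
    funext s; simp only [Bop]
  have h1 : HasDerivAt (fun s => dQ Ψ (y.1, y.2.1, s)) (dT (dQ Ψ) y) y.2.2 :=
    hasDerivAt_T (contDiff_dQ hΨ) y
  have h3 : HasDerivAt (fun s => dT Ψ (y.1, y.2.1, s)) (dT (dT Ψ) y) y.2.2 :=
    hasDerivAt_T (contDiff_dT hΨ) y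
  have total := h1.sub (h3.const_mul (((y.1 / hb : ℝ) : ℂ)))
  have hTQ : dT (dQ Ψ) y = Complex.I * dQ Ψ y := by
    rw [← dQdT_comm hΨ]
    have : dT Ψ = fun x => Complex.I * Ψ x := hΨeq
    rw [this]
    exact dQ_const_mul_apply _ _ _
  have hTT : dT (dT Ψ) y = Complex.I * dT Ψ y := by
    conv_lhs => rw [hΨeq]
    exact dT_const_mul_apply _ _ _
  have hstart : dT (Bop hb Ψ) y = deriv (fun s => Bop hb Ψ (y.1, y.2.1, s)) y.2.2 := rfl
  rw [hstart, hfun]; erw [total.deriv, hTQ, hTT]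
  simp only [Bop]
  ring

end Keys
section Keys2
variable {hb : ℝ} {Ψ H : ℝ × ℝ × ℝ → ℂ}

/-- K2 : `∂_p (B (B Ψ)) = -(2i/ħ) (B Ψ)`. -/
lemma K2 (hΨ : ContDiff ℝ (⊤ : ℕ∞) Ψ) (hΨeq : dT Ψ = fun x => Complex.I * Ψ x)
    (hΨpol : dP Ψ = 0) :
    dP (Bop hb (Bop hb Ψ)) = fun y => -(2 * Complex.I / hb) * Bop hb Ψ y := by
  have hφ : ContDiff ℝ (⊤ : ℕ∞) (Bop hb Ψ) := contDiff_Bop hb hΨ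
  funext y
  have hfun : (fun s => Bop hb (Bop hb Ψ) (s, y.2.1, y.2.2)) =
      fun s => dQ (Bop hb Ψ) (s, y.2.1, y.2.2) -
        ((s / hb : ℝ) : ℂ) * dT (Bop hb Ψ) (s, y.2.1, y.2.2) := by
    funext s; simp only [Bop]
  have h1 : HasDerivAt (fun s => dQ (Bop hb Ψ) (s, y.2.1, y.2.2))
      (dP (dQ (Bop hb Ψ)) y) y.1 := hasDerivAt_P (contDiff_dQ hφ) y
  have h3 : HasDerivAt (fun s => dT (Bop hb Ψ) (s, y.2.1, y.2.2))
      (dP (dT (Bop hb Ψ)) y) y.1 := hasDerivAt_P (contDiff_dT hφ) y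
  have total := h1.sub ((coef_hasDerivAt hb y.1).mul h3)
  have hPQ : dP (dQ (Bop hb Ψ)) y = -(Complex.I / hb) * dQ Ψ y := by
    rw [dPdQ_comm hφ, K1 hΨ hΨeq hΨpol]
    exact dQ_const_mul_apply _ _ _
  have hPT : dP (dT (Bop hb Ψ)) y = -(Complex.I / hb) * (Complex.I * Ψ y) := by
    rw [dPdT_comm hφ, K1 hΨ hΨeq hΨpol]
    rw [dT_const_mul_apply, congrFun hΨeq y]
  have hTφ : dT (Bop hb Ψ) y = Complex.I * Bop hb Ψ y := congrFun (K4 hΨ hΨeq) y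
  have hstart : dP (Bop hb (Bop hb Ψ)) y
      = deriv (fun s => Bop hb (Bop hb Ψ) (s, y.2.1, y.2.2)) y.1 := rfl
  rw [hstart, hfun]; erw [total.deriv]
  simp only [Prod.mk.eta]
  rw [hPQ, hTφ, hPT]
  have hBy : Bop hb Ψ y = dQ Ψ y - ((y.1 / hb : ℝ) : ℂ) * (Complex.I * Ψ y) := by
    simp only [Bop]; rw [congrFun hΨeq y]
  rw [hBy]
  push_cast
  ring

/-- K3 : on `F = ∂_p H` with `∂_θ H = 0`, `B` and `∂_p` commute. -/
lemma K3 (hH : ContDiff ℝ (⊤ : ℕ∞) H) (hHobs : dT H = 0) :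
    Bop hb (dP (dP H)) = dP (Bop hb (dP H)) := by
  have hF : ContDiff ℝ (⊤ : ℕ∞) (dP H) := contDiff_dP hH
  have hTF : dT (dP H) = 0 := by rw [← dPdT_comm hH, hHobs, dP_zero]
  have hTPF : dT (dP (dP H)) = 0 := by rw [← dPdT_comm hF, hTF, dP_zero]
  have hBF : Bop hb (dP H) = dQ (dP H) := by
    funext x; simp only [Bop]; rw [congrFun hTF x]; simp
  have hL : Bop hb (dP (dP H)) = dQ (dP (dP H)) := by
    funext x; simp only [Bop]; rw [congrFun hTPF x]; simp
  rw [hL, hBF, dPdQ_comm hF]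

end Keys2

section Tens
variable (hb : ℝ) (F G : ℝ × ℝ × ℝ → ℂ)

lemma L1_dP_tens : L1 dP (tens F G) = tens (dP F) G := by
  funext z
  exact dP_mul_const_apply (G z.2) F z.1

lemma L2_dP_tens : L2 dP (tens F G) = tens F (dP G) := by
  funext z
  exact dP_const_mul_apply (F z.1) G z.2

lemma L1_Bop_tens : L1 (Bop hb) (tens F G) = tens (Bop hb F) G := by
  funext z
  exact Bop_mul_const_apply (G z.2) F z.1 hb

lemma L2_Bop_tens : L2 (Bop hb) (tens F G) = tens F (Bop hb G) := by
  funext z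
  exact Bop_const_mul_apply (F z.1) G z.2 hb

lemma Nop_tens : Nop hb (tens F G) = tens (dP F) (Bop hb G) := by
  unfold Nop
  rw [L2_Bop_tens, L1_dP_tens]

lemma Mop_tens : Mop hb (tens F G) = fun z => -(tens (Bop hb F) (dP G) z) := by
  unfold Mop
  rw [L2_dP_tens, L1_Bop_tens]

lemma tens_zero_right : tens F (0 : ℝ × ℝ × ℝ → ℂ) = 0 := by
  funext z; simp [tens]

variable (v : (ℝ × ℝ × ℝ) × (ℝ × ℝ × ℝ) → ℂ)

lemma L2_Bop_neg : L2 (Bop hb) (fun z => -(v z)) = fun z => -(L2 (Bop hb) v z) := by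
  funext z
  exact Bop_neg_apply (fun y => v (z.1, y)) z.2 hb

lemma L2_dP_neg : L2 dP (fun z => -(v z)) = fun z => -(L2 dP v z) := by
  funext z
  exact dP_neg_apply (fun y => v (z.1, y)) z.2

lemma Nop_neg : Nop hb (fun z => -(v z)) = fun z => -(Nop hb v z) := by
  unfold Nop
  rw [L2_Bop_neg]
  funext z
  exact dP_neg_apply (fun x => L2 (Bop hb) v (x, z.2)) z.1

lemma Mop_neg : Mop hb (fun z => -(v z)) = fun z => -(Mop hb v z) := by
  unfold Mop
  rw [L2_dP_neg]
  funext z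
  have := Bop_neg_apply (fun x => L2 dP v (x, z.2)) z.1 hb
  simp only [L1]
  rw [this]

lemma Nop_zero : Nop hb (0 : (ℝ × ℝ × ℝ) × (ℝ × ℝ × ℝ) → ℂ) = 0 := by
  unfold Nop
  have h2 : L2 (Bop hb) (0 : (ℝ × ℝ × ℝ) × (ℝ × ℝ × ℝ) → ℂ) = 0 := by
    funext z
    exact congrFun (Bop_zero hb) z.2
  rw [h2]
  funext z
  exact congrFun dP_zero z.1

lemma Mop_zero : Mop hb (0 : (ℝ × ℝ × ℝ) × (ℝ × ℝ × ℝ) → ℂ) = 0 := by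
  unfold Mop
  have h2 : L2 dP (0 : (ℝ × ℝ × ℝ) × (ℝ × ℝ × ℝ) → ℂ) = 0 := by
    funext z
    exact congrFun dP_zero z.2
  rw [h2]
  funext z
  have : L1 (Bop hb) (0 : (ℝ × ℝ × ℝ) × (ℝ × ℝ × ℝ) → ℂ) z = 0 :=
    congrFun (Bop_zero hb) z.1
  rw [this]
  simp

end Tens

/-- Both double commutators of the lifted normal and anti-normal tensors annihilate `H ⊗ Ψ`:
`[N,[N,M]](H ⊗ Ψ) = 0` and `[M,[N,M]](H ⊗ Ψ) = 0`. -/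
theorem double_commutators_vanish (hb : ℝ) (hhbar : 0 < hb)
    (H Ψ : ℝ × ℝ × ℝ → ℂ) (hH : ContDiff ℝ (⊤ : ℕ∞) H) (hΨ : ContDiff ℝ (⊤ : ℕ∞) Ψ)
    (hHobs : dT H = 0)
    (hΨeq : dT Ψ = fun x => Complex.I * Ψ x) (hΨpol : dP Ψ = 0) :
    commOp (Nop hb) (commOp (Nop hb) (Mop hb)) (tens H Ψ) = 0 ∧
    commOp (Mop hb) (commOp (Nop hb) (Mop hb)) (tens H Ψ) = 0 := by
  have hMu : Mop hb (tens H Ψ) = 0 := by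
    rw [Mop_tens, hΨpol, tens_zero_right]
    funext z; simp
  have hNu : Nop hb (tens H Ψ) = tens (dP H) (Bop hb Ψ) := Nop_tens hb H Ψ
  have hBc : Bop hb (fun y => -(Complex.I / hb) * Ψ y)
      = fun x => -(Complex.I / hb) * Bop hb Ψ x :=
    funext fun x => Bop_const_mul_apply _ _ _ _
  have hdPc : dP (fun y => -(Complex.I / hb) * Ψ y)
      = fun x => -(Complex.I / hb) * dP Ψ x :=
    funext fun x => dP_const_mul_apply _ _ _
  have hMNu : Mop hb (Nop hb (tens H Ψ))
      = fun z => -(tens (Bop hb (dP H)) (fun y => -(Complex.I / hb) * Ψ y) z) := by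
    rw [hNu, Mop_tens, K1 hΨ hΨeq hΨpol]
  have hNMNu : Nop hb (Mop hb (Nop hb (tens H Ψ)))
      = fun z => -(tens (dP (Bop hb (dP H)))
          (fun x => -(Complex.I / hb) * Bop hb Ψ x) z) := by
    rw [hMNu, Nop_neg, Nop_tens, hBc]
  have hNNu : Nop hb (Nop hb (tens H Ψ))
      = tens (dP (dP H)) (Bop hb (Bop hb Ψ)) := by
    rw [hNu, Nop_tens]
  have hMNNu : Mop hb (Nop hb (Nop hb (tens H Ψ)))
      = fun z => -(tens (Bop hb (dP (dP H)))
          (fun y => -(2 * Complex.I / hb) * Bop hb Ψ y) z) := by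
    rw [hNNu, Mop_tens, K2 hΨ hΨeq hΨpol]
  have hMMNu : Mop hb (Mop hb (Nop hb (tens H Ψ))) = 0 := by
    rw [hMNu, Mop_neg, Mop_tens, hdPc, hΨpol]
    funext z; simp [tens]
  have hlam : (fun z => Nop hb (Mop hb (tens H Ψ)) z - Mop hb (Nop hb (tens H Ψ)) z)
      = fun z => -(Mop hb (Nop hb (tens H Ψ)) z) := by
    rw [hMu, Nop_zero]
    funext z; simp
  constructor
  · unfold commOp
    funext z
    rw [hlam, Nop_neg, hNMNu, hMNNu, K3 hH hHobs]
    simp only [tens, Pi.zero_apply]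
    ring
  · unfold commOp
    funext z
    rw [hlam, Mop_neg, hMMNu, hMu, Mop_zero, Nop_zero, Mop_zero]
    simp
end
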